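/- (Sampling-overhead lower bound on the distilled normalization.) Suppose p_q = max_k p_k is attained at index q, let n ≥ 1 be an integer, and set ε = ‖ρ̄ − ρ‖₁. If (p_q + ε)ⁿ < 2 p_qⁿ, then the (real) trace of ρ̄ⁿ satisfies tr(ρ̄ⁿ) ≥ 2 p_qⁿ − (p_q + ε)ⁿ > 0, and consequently the sampling overhead obeys tr(ρ̄ⁿ)⁻² ≤ ( 2 p_qⁿ − (p_q + ε)ⁿ )⁻². -/

import Mathlib

/-!
In the energy eigenbasis, time evolution only multiplies the amplitudes `c_k` by phases, so every
`ρ(t)`, and hence the Gaussian average `ρ̄`, has diagonal entries `⟨ψ_k, ρ̄ ψ_k⟩ = p_k`. Being an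
average of pure states, `ρ̄` is positive semidefinite, so its largest eigenvalue is at least the
Rayleigh quotient `p_q` and `tr(ρ̄ⁿ) ≥ p_qⁿ`. Since `ε ≥ 0`, `p_qⁿ ≥ 2 p_qⁿ − (p_q + ε)ⁿ`, which is
positive by assumption; inverting and squaring gives the overhead bound.
-/

open MeasureTheory Complex
open scoped BigOperators ComplexConjugate Real NormedSpace ComplexOrder

attribute [local instance] Matrix.frobeniusSeminormedAddCommGroup
  Matrix.frobeniusNormedAddCommGroup Matrix.frobeniusNormedSpace

noncomputable section

/-- The complex inner product on `ℂ^d`, conjugate-linear in the first argument. -/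
def cinner {d : ℕ} (u v : Fin d → ℂ) : ℂ := ∑ i, conj (u i) * v i

/-- The rank-one matrix `|u⟩⟨v|`, acting as `w ↦ ⟨v, w⟩ u`. -/
def ketbra {d : ℕ} (u v : Fin d → ℂ) : Matrix (Fin d) (Fin d) ℂ :=
  Matrix.of fun i j => u i * conj (v j)

/-- The density of the centered normal distribution `N(0, σ)`. -/
def gaussPDF (σ t : ℝ) : ℝ := (Real.sqrt (2 * π) * σ)⁻¹ * Real.exp (-(t ^ 2) / (2 * σ ^ 2))

/-- The time-evolved state `ψ(t) = exp(−i t H) ψ(0)`. -/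
def evolve {d : ℕ} (H : Matrix (Fin d) (Fin d) ℂ) (ψ0 : Fin d → ℂ) (t : ℝ) : Fin d → ℂ :=
  (NormedSpace.exp ((-(Complex.I * (t : ℂ))) • H)).mulVec ψ0

/-- The time-evolved pure state `ρ(t) = |ψ(t)⟩⟨ψ(t)|`. -/
def rhoT {d : ℕ} (H : Matrix (Fin d) (Fin d) ℂ) (ψ0 : Fin d → ℂ) (t : ℝ) :
    Matrix (Fin d) (Fin d) ℂ :=
  ketbra (evolve H ψ0 t) (evolve H ψ0 t)

/-- The Gaussian time-average `ρ̄ = ∫ G(t) ρ(t) dt` (a Bochner integral of the matrix-valued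
function, with respect to the Frobenius norm topology on matrices). -/
def rhoBar {d : ℕ} (H : Matrix (Fin d) (Fin d) ℂ) (ψ0 : Fin d → ℂ) (σ : ℝ) :
    Matrix (Fin d) (Fin d) ℂ :=
  ∫ t : ℝ, gaussPDF σ t • rhoT H ψ0 t

/-- The trace norm (sum of singular values) `‖A‖₁ = tr √(Aᴴ A)`. -/
def traceNorm {d : ℕ} (A : Matrix (Fin d) (Fin d) ℂ) : ℝ :=
  (((Matrix.posSemidef_conjTranspose_mul_self A).1.eigenvectorUnitary.1 *
      Matrix.diagonal (((↑) : ℝ → ℂ) ∘ (√·) ∘ (Matrix.posSemidef_conjTranspose_mul_self A).1.eigenvalues) *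
      (star (Matrix.posSemidef_conjTranspose_mul_self A).1.eigenvectorUnitary : Matrix (Fin d) (Fin d) ℂ)).trace).re

/-- The operator norm `‖A‖_∞` of a matrix acting on the Euclidean space `ℂ^d`. -/
def opNorm {d : ℕ} (A : Matrix (Fin d) (Fin d) ℂ) : ℝ :=
  ‖Matrix.toEuclideanCLM (𝕜 := ℂ) A‖

open Matrix

attribute [local instance] Matrix.frobeniusNormedRing Matrix.frobeniusNormedAlgebra in
theorem Matrix.exp_mulVec_of_mulVec_eq_smul {m 𝕂 : Type*} [Fintype m] [DecidableEq m] [RCLike 𝕂]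
    {A : Matrix m m 𝕂} {v : m → 𝕂} {μ : 𝕂} (h : A *ᵥ v = μ • v) :
    NormedSpace.exp A *ᵥ v = NormedSpace.exp μ • v := by
  have hpow (k : ℕ) : A ^ k *ᵥ v = μ ^ k • v := by
    induction k with
    | zero => simp
    | succ k ih => rw [pow_succ', ← mulVec_mulVec, ih, mulVec_smul, h, smul_smul, pow_succ]
  have hA := (NormedSpace.exp_series_hasSum_exp' (𝕂 := 𝕂) A).map
    (mulVec.addMonoidHomLeft v) (continuous_id.matrix_mulVec continuous_const)
  have hμ := (NormedSpace.exp_series_hasSum_exp' (𝕂 := 𝕂) μ).smul_const v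
  refine hA.unique (hμ.congr_fun fun k => ?_)
  simp [mulVec.addMonoidHomLeft, smul_mulVec, hpow, smul_smul]

section Spectral

variable {m n 𝕜 : Type*} [Fintype m] [Fintype n] [RCLike 𝕜]

theorem Matrix.star_dotProduct_mul_mul_conjTranspose_mulVec (B : Matrix m n 𝕜)
    (M : Matrix n n 𝕜) (x : m → 𝕜) :
    star x ⬝ᵥ ((B * M * Bᴴ) *ᵥ x) = star (Bᴴ *ᵥ x) ⬝ᵥ (M *ᵥ (Bᴴ *ᵥ x)) := by
  rw [star_mulVec, conjTranspose_conjTranspose, ← mulVec_mulVec, ← mulVec_mulVec,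
    dotProduct_mulVec]

variable [DecidableEq n]

theorem Matrix.re_star_dotProduct_diagonal_mulVec (r : n → ℝ) (w : n → 𝕜) :
    RCLike.re (star w ⬝ᵥ (diagonal (RCLike.ofReal ∘ r) *ᵥ w)) = ∑ i, r i * ‖w i‖ ^ 2 := by
  simp only [dotProduct, mulVec_diagonal, map_sum, Pi.star_apply, RCLike.star_def,
    Function.comp_apply]
  refine Finset.sum_congr rfl fun i _ => ?_
  rw [mul_left_comm, RCLike.conj_mul, ← RCLike.ofReal_pow, ← RCLike.ofReal_mul, RCLike.ofReal_re]

theorem Matrix.IsHermitian.trace_pow {A : Matrix n n 𝕜} (hA : A.IsHermitian) (k : ℕ) :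
    (A ^ k).trace = ∑ i, (hA.eigenvalues i : 𝕜) ^ k := by
  conv_lhs => rw [hA.spectral_theorem, ← map_pow, Unitary.conjStarAlgAut_apply, trace_mul_cycle,
    Unitary.coe_star_mul_self, one_mul, diagonal_pow, trace_diagonal]
  simp

theorem Matrix.PosSemidef.re_star_dotProduct_mulVec_pow_le {A : Matrix n n 𝕜}
    (hA : A.PosSemidef) {x : n → 𝕜} (hx : star x ⬝ᵥ x = 1) (k : ℕ) :
    RCLike.re (star x ⬝ᵥ (A *ᵥ x)) ^ k ≤ RCLike.re (A ^ k).trace := by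
  set U : Matrix n n 𝕜 := ↑hA.1.eigenvectorUnitary
  set ev := hA.1.eigenvalues
  have hspec : A = U * diagonal (RCLike.ofReal ∘ ev) * Uᴴ := by
    conv_lhs => rw [hA.1.spectral_theorem, Unitary.conjStarAlgAut_apply]
    rfl
  set w := Uᴴ *ᵥ x
  have hw : ∑ i, ‖w i‖ ^ 2 = 1 := by
    have hU : U * diagonal (RCLike.ofReal ∘ 1) * Uᴴ = 1 := by
      simp [U, Function.comp_def, ← star_eq_conjTranspose]
    have h := re_star_dotProduct_diagonal_mulVec 1 w
    rw [← star_dotProduct_mul_mul_conjTranspose_mulVec, hU, one_mulVec, hx] at h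
    simpa using h.symm
  have hq : RCLike.re (star x ⬝ᵥ (A *ᵥ x)) = ∑ i, ev i * ‖w i‖ ^ 2 := by
    rw [hspec, star_dotProduct_mul_mul_conjTranspose_mulVec, re_star_dotProduct_diagonal_mulVec]
  have : Nonempty n := by
    rw [← not_isEmpty_iff]
    intro
    simp at hw
  obtain ⟨i₀, hi₀⟩ := Finite.exists_max ev
  have hle : RCLike.re (star x ⬝ᵥ (A *ᵥ x)) ≤ ev i₀ := by
    calc RCLike.re (star x ⬝ᵥ (A *ᵥ x)) = ∑ i, ev i * ‖w i‖ ^ 2 := hq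
      _ ≤ ∑ i, ev i₀ * ‖w i‖ ^ 2 := by gcongr with i; exact hi₀ i
      _ = ev i₀ := by rw [← Finset.mul_sum, hw, mul_one]
  calc RCLike.re (star x ⬝ᵥ (A *ᵥ x)) ^ k ≤ ev i₀ ^ k :=
        pow_le_pow_left₀ (hA.re_dotProduct_nonneg x) hle k
    _ ≤ ∑ i, ev i ^ k :=
        Finset.single_le_sum (fun i _ => pow_nonneg (hA.eigenvalues_nonneg i) k)
          (Finset.mem_univ i₀)
    _ = RCLike.re (A ^ k).trace := by simp [hA.1.trace_pow, ev]

end Spectral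

theorem Matrix.posSemidef_of_forall_star_dotProduct_mulVec_nonneg {n : Type*} [Fintype n]
    [DecidableEq n] {A : Matrix n n ℂ} (h : ∀ x, 0 ≤ star x ⬝ᵥ (A *ᵥ x)) : A.PosSemidef := by
  rw [← Matrix.isPositive_toEuclideanLin_iff, LinearMap.isPositive_iff_complex]
  intro x
  obtain ⟨r, hr, hx⟩ := RCLike.nonneg_iff_exists_ofReal.mp (h x.ofLp)
  rw [EuclideanSpace.inner_eq_star_dotProduct, Matrix.ofLp_toLpLin, Matrix.toLin'_apply,
    dotProduct_star, dotProduct_comm, ← hx]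
  simp [hr]

/-- Instance search finds the product topology of matrices before the topology of the Frobenius
norm instances above, but `Integrable` needs the latter. -/
abbrev Matrix.frobeniusTopologicalSpace {m n : Type*} [Fintype m] [Fintype n] :
    TopologicalSpace (Matrix m n ℂ) :=
  Matrix.frobeniusSeminormedAddCommGroup.toUniformSpace.toTopologicalSpace

attribute [local instance] Matrix.frobeniusTopologicalSpace

theorem Matrix.dotProduct_integral_mulVec {n α : Type*} [Fintype n] [DecidableEq n]
    [MeasurableSpace α] {μ : Measure α} {f : α → Matrix n n ℂ} (hf : Integrable f μ) (u v : n → ℂ) :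
    u ⬝ᵥ ((∫ a, f a ∂μ) *ᵥ v) = ∫ a, u ⬝ᵥ (f a *ᵥ v) ∂μ := by
  let L : Matrix n n ℂ →L[ℂ] ℂ := LinearMap.toContinuousLinearMap
    (LinearMap.applyₗ v ∘ₗ LinearMap.applyₗ u ∘ₗ (toLinearMap₂' ℂ).toLinearMap)
  simpa [L, toLinearMap₂'_apply'] using (L.integral_comp_comm hf).symm

theorem gaussPDF_nonneg {σ : ℝ} (hσ : 0 ≤ σ) (t : ℝ) : 0 ≤ gaussPDF σ t := by
  unfold gaussPDF; positivity

theorem gaussPDF_eq_mul_exp_neg_mul_sq (σ : ℝ) :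
    gaussPDF σ = fun t => (√(2 * π) * σ)⁻¹ * Real.exp (-(2 * σ ^ 2)⁻¹ * t ^ 2) := by
  ext t
  rw [gaussPDF, neg_div, div_eq_inv_mul, neg_mul]

theorem integrable_gaussPDF {σ : ℝ} (hσ : 0 < σ) : Integrable (gaussPDF σ) := by
  rw [gaussPDF_eq_mul_exp_neg_mul_sq]
  exact (integrable_exp_neg_mul_sq (by positivity)).const_mul _

theorem integral_gaussPDF {σ : ℝ} (hσ : 0 < σ) : ∫ t, gaussPDF σ t = 1 := by
  rw [gaussPDF_eq_mul_exp_neg_mul_sq, integral_const_mul, integral_gaussian,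
    show π / (2 * σ ^ 2)⁻¹ = 2 * π * σ ^ 2 by field_simp, Real.sqrt_mul' _ (sq_nonneg σ),
    Real.sqrt_sq hσ.le, inv_mul_cancel₀ (by positivity)]

section Dephasing

variable {d : ℕ} {H : Matrix (Fin d) (Fin d) ℂ} {ψ : Fin d → Fin d → ℂ} {E : Fin d → ℝ}
  {c : Fin d → ℂ} {ψ0 : Fin d → ℂ}

theorem cinner_eq_star_dotProduct (u v : Fin d → ℂ) : cinner u v = star u ⬝ᵥ v := rfl

theorem ketbra_eq_vecMulVec (u v : Fin d → ℂ) : ketbra u v = vecMulVec u (star v) := rfl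

theorem star_dotProduct_ketbra_mulVec (u v : Fin d → ℂ) :
    star v ⬝ᵥ (ketbra u u *ᵥ v) = ((‖star v ⬝ᵥ u‖ ^ 2 : ℝ) : ℂ) := by
  rw [ketbra_eq_vecMulVec, vecMulVec_mulVec, op_smul_eq_smul, dotProduct_smul, smul_eq_mul,
    star_dotProduct u v, RCLike.star_def, RCLike.conj_mul]
  norm_cast

theorem ketbra_sum_sum {ι κ : Type*} [Fintype ι] [Fintype κ] (a : ι → ℂ) (u : ι → Fin d → ℂ)
    (b : κ → ℂ) (w : κ → Fin d → ℂ) :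
    ketbra (∑ j, a j • u j) (∑ k, b k • w k)
      = ∑ j, ∑ k, (a j * conj (b k)) • ketbra (u j) (w k) := by
  ext i l
  simp only [ketbra, of_apply, Finset.sum_apply, Pi.smul_apply, smul_eq_mul, map_sum, map_mul,
    Matrix.sum_apply, Matrix.smul_apply, Finset.sum_mul_sum]
  exact Finset.sum_congr rfl fun j _ => Finset.sum_congr rfl fun k _ => by ring

theorem star_dotProduct_sum_of_orthonormal
    (horth : ∀ j k, cinner (ψ j) (ψ k) = if j = k then 1 else 0) (a : Fin d → ℂ) (q : Fin d) :
    star (ψ q) ⬝ᵥ ∑ k, a k • ψ k = a q := by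
  simp [dotProduct_sum, ← cinner_eq_star_dotProduct, horth]

theorem evolve_eq_sum (heig : ∀ k, H *ᵥ ψ k = (E k : ℂ) • ψ k) (hψ0 : ψ0 = ∑ k, c k • ψ k)
    (t : ℝ) : evolve H ψ0 t = ∑ k, (cexp (-(I * t) * E k) * c k) • ψ k := by
  simp only [evolve, hψ0, mulVec_sum, mulVec_smul, mul_smul]
  refine Finset.sum_congr rfl fun k _ => ?_
  rw [exp_mulVec_of_mulVec_eq_smul (by rw [smul_mulVec, heig, smul_smul]), Complex.exp_eq_exp_ℂ,
    smul_comm]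

theorem norm_cexp_neg_I_mul_mul (t e : ℝ) : ‖cexp (-(I * t) * e)‖ = 1 := by
  rw [show -(I * t) * e = ((-(t * e) : ℝ) : ℂ) * I by push_cast; ring]
  exact norm_exp_ofReal_mul_I _

theorem rhoT_eq_sum (heig : ∀ k, H *ᵥ ψ k = (E k : ℂ) • ψ k) (hψ0 : ψ0 = ∑ k, c k • ψ k)
    (t : ℝ) : rhoT H ψ0 t = ∑ j, ∑ k,
      (cexp (-(I * t) * E j) * c j * conj (cexp (-(I * t) * E k) * c k)) • ketbra (ψ j) (ψ k) := by
  rw [rhoT, evolve_eq_sum heig hψ0, ketbra_sum_sum]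

theorem integrable_gaussPDF_smul_rhoT (heig : ∀ k, H *ᵥ ψ k = (E k : ℂ) • ψ k)
    (hψ0 : ψ0 = ∑ k, c k • ψ k) {σ : ℝ} (hσ : 0 < σ) :
    Integrable fun t => gaussPDF σ t • rhoT H ψ0 t := by
  simp_rw [rhoT_eq_sum heig hψ0, Finset.smul_sum, ← smul_assoc]
  refine integrable_finsetSum _ fun j _ => integrable_finsetSum _ fun k _ =>
    Integrable.smul_const ?_ _
  refine (integrable_gaussPDF hσ).smul_bdd (‖c j‖ * ‖c k‖) (by fun_prop) (ae_of_all _ fun t => ?_)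
  simp only [norm_mul, Complex.norm_conj, norm_cexp_neg_I_mul_mul, one_mul, le_refl]

theorem star_dotProduct_rhoBar_mulVec {σ : ℝ}
    (hint : Integrable fun t => gaussPDF σ t • rhoT H ψ0 t) (v : Fin d → ℂ) :
    star v ⬝ᵥ (rhoBar H ψ0 σ *ᵥ v)
      = ((∫ t, gaussPDF σ t * ‖star v ⬝ᵥ evolve H ψ0 t‖ ^ 2 : ℝ) : ℂ) := by
  rw [rhoBar, dotProduct_integral_mulVec hint, ← integral_complex_ofReal]
  refine integral_congr_ae (ae_of_all _ fun t => ?_)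
  dsimp only
  rw [smul_mulVec, dotProduct_smul, rhoT, star_dotProduct_ketbra_mulVec, Complex.real_smul]
  push_cast
  rfl

theorem posSemidef_rhoBar {σ : ℝ} (hσ : 0 ≤ σ)
    (hint : Integrable fun t => gaussPDF σ t • rhoT H ψ0 t) : (rhoBar H ψ0 σ).PosSemidef :=
  posSemidef_of_forall_star_dotProduct_mulVec_nonneg fun v => by
    rw [star_dotProduct_rhoBar_mulVec hint, Complex.zero_le_real]
    exact integral_nonneg fun t => mul_nonneg (gaussPDF_nonneg hσ t) (sq_nonneg _)

theorem star_dotProduct_rhoBar_mulVec_eigenvector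
    (horth : ∀ j k, cinner (ψ j) (ψ k) = if j = k then 1 else 0)
    (heig : ∀ k, H *ᵥ ψ k = (E k : ℂ) • ψ k) (hψ0 : ψ0 = ∑ k, c k • ψ k) {σ : ℝ} (hσ : 0 < σ)
    (q : Fin d) : star (ψ q) ⬝ᵥ (rhoBar H ψ0 σ *ᵥ ψ q) = ((‖c q‖ ^ 2 : ℝ) : ℂ) := by
  simp_rw [star_dotProduct_rhoBar_mulVec (integrable_gaussPDF_smul_rhoT heig hψ0 hσ),
    evolve_eq_sum heig hψ0, star_dotProduct_sum_of_orthonormal horth, norm_mul,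
    norm_cexp_neg_I_mul_mul, one_mul, integral_mul_const, integral_gaussPDF hσ, one_mul]

end Dephasing

theorem traceNorm_nonneg {d : ℕ} (A : Matrix (Fin d) (Fin d) ℂ) : 0 ≤ traceNorm A := by
  rw [traceNorm, trace_mul_cycle, Unitary.coe_star_mul_self, one_mul, trace_diagonal, re_sum]
  exact Finset.sum_nonneg fun i _ => by simp [Real.sqrt_nonneg]

theorem sampling_overhead_bound_general
    {d : ℕ}
    (H : Matrix (Fin d) (Fin d) ℂ)
    (ψ : Fin d → Fin d → ℂ) (E : Fin d → ℝ)
    (horth : ∀ j k, cinner (ψ j) (ψ k) = if j = k then 1 else 0)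
    (heig : ∀ k, H.mulVec (ψ k) = (E k : ℂ) • ψ k)
    (c : Fin d → ℂ) (ψ0 : Fin d → ℂ) (hψ0 : ψ0 = ∑ k, c k • ψ k)
    (p : Fin d → ℝ) (hp : ∀ k, p k = ‖c k‖ ^ 2)
    (ρ : Matrix (Fin d) (Fin d) ℂ)
    (σ : ℝ) (hσ : 0 < σ)
    (q : Fin d)
    (n : ℕ)
    (ε : ℝ) (hε : ε = traceNorm (rhoBar H ψ0 σ - ρ))
    (hsmall : (p q + ε) ^ n < 2 * p q ^ n) :
    2 * p q ^ n - (p q + ε) ^ n ≤ ((rhoBar H ψ0 σ ^ n).trace).re ∧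
    0 < ((rhoBar H ψ0 σ ^ n).trace).re ∧
    (((rhoBar H ψ0 σ ^ n).trace).re)⁻¹ ^ 2 ≤ ((2 * p q ^ n - (p q + ε) ^ n)⁻¹) ^ 2 := by
  have hunit : star (ψ q) ⬝ᵥ ψ q = 1 := by simpa [cinner_eq_star_dotProduct] using horth q q
  have hpsd := posSemidef_rhoBar hσ.le (integrable_gaussPDF_smul_rhoT heig hψ0 hσ)
  have hpow : p q ^ n ≤ ((rhoBar H ψ0 σ ^ n).trace).re := by
    have := hpsd.re_star_dotProduct_mulVec_pow_le hunit n
    rwa [star_dotProduct_rhoBar_mulVec_eigenvector horth heig hψ0 hσ q, RCLike.re_to_complex,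
      Complex.ofReal_re, ← hp q] at this
  have hmono : p q ^ n ≤ (p q + ε) ^ n :=
    pow_le_pow_left₀ (hp q ▸ sq_nonneg _) (le_add_of_nonneg_right (hε ▸ traceNorm_nonneg _)) n
  have hbound : 2 * p q ^ n - (p q + ε) ^ n ≤ ((rhoBar H ψ0 σ ^ n).trace).re := by linarith
  have hpos : 0 < 2 * p q ^ n - (p q + ε) ^ n := by linarith
  have htr : 0 < ((rhoBar H ψ0 σ ^ n).trace).re := hpos.trans_le hbound
  exact ⟨hbound, htr, pow_le_pow_left₀ (inv_pos.2 htr).le (inv_anti₀ hpos hbound) 2⟩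

/-- sampling-overhead lower bound: with `ε = ‖ρ̄ − ρ‖₁` and
`(p_q + ε)ⁿ < 2 p_qⁿ`, one has `tr(ρ̄ⁿ) ≥ 2 p_qⁿ − (p_q + ε)ⁿ > 0`, hence
`tr(ρ̄ⁿ)⁻² ≤ (2 p_qⁿ − (p_q + ε)ⁿ)⁻²`. -/
theorem sampling_overhead_bound
    {d : ℕ} (hd : 0 < d)
    (H : Matrix (Fin d) (Fin d) ℂ) (hH : H.IsHermitian)
    (ψ : Fin d → Fin d → ℂ) (E : Fin d → ℝ)
    (horth : ∀ j k, cinner (ψ j) (ψ k) = if j = k then 1 else 0)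
    (heig : ∀ k, H.mulVec (ψ k) = (E k : ℂ) • ψ k)
    (c : Fin d → ℂ) (ψ0 : Fin d → ℂ) (hψ0 : ψ0 = ∑ k, c k • ψ k)
    (hunit : cinner ψ0 ψ0 = 1)
    (p : Fin d → ℝ) (hp : ∀ k, p k = ‖c k‖ ^ 2)
    (ρ : Matrix (Fin d) (Fin d) ℂ) (hρ : ρ = ∑ k, (p k : ℂ) • ketbra (ψ k) (ψ k))
    (σ : ℝ) (hσ : 0 < σ)
    (q : Fin d) (hq : ∀ k, p k ≤ p q)
    (n : ℕ) (hn : 1 ≤ n)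
    (ε : ℝ) (hε : ε = traceNorm (rhoBar H ψ0 σ - ρ))
    (hsmall : (p q + ε) ^ n < 2 * p q ^ n) :
    2 * p q ^ n - (p q + ε) ^ n ≤ ((rhoBar H ψ0 σ ^ n).trace).re ∧
    0 < ((rhoBar H ψ0 σ ^ n).trace).re ∧
    (((rhoBar H ψ0 σ ^ n).trace).re)⁻¹ ^ 2 ≤ ((2 * p q ^ n - (p q + ε) ^ n)⁻¹) ^ 2 :=
  sampling_overhead_bound_general H ψ E horth heig c ψ0 hψ0 p hp ρ σ hσ q n ε hε hsmall

end
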